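/- Let M ∈ ℂ^{ℓ×ℓ} be diagonalizable, M = VΛV^{−1}, let (p_j)_{j≥0} ⊂ ℂ[x], (α_j)_{j≥0} ⊂ ℂ, and suppose there are constants C, M₀, c > 0 and ρ > 1 such that |α_j| ≤ C·M₀·ρ^{−j} for all j and |p_j(λ)| ≤ c for all j and all λ ∈ σ(M); let F = Σ_{j≥0} α_j p_j(M) (which converges). If (α̃_j)_{j≥0} ⊂ ℂ are perturbed coefficients with |α̃_j − α_j| ≤ ε for all j, then for every k ≥ 0, ‖F − Σ_{j=0}^{k−1} α̃_j p_j(M)‖₂ ≤ ‖V‖₂·‖V^{−1}‖₂·( ε·Σ_{j=0}^{k−1} max_{λ ∈ σ(M)} |p_j(λ)| + c·C·M₀·ρ^{−k}/(1 − ρ^{−1}) ). -/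

import Mathlib

/-- The spectral norm of a complex matrix: the operator norm of the induced linear map between
Euclidean spaces. -/
noncomputable def specNorm {m n : ℕ} (M : Matrix (Fin m) (Fin n) ℂ) : ℝ :=
  ‖LinearMap.toContinuousLinearMap (Matrix.toEuclideanLin M)‖

/-! Writing `M = V Λ V⁻¹`, each `p_j(M) = V p_j(Λ) V⁻¹` where `p_j(Λ)` is diagonal with entries
`p_j(λ)`, `λ ∈ σ(M)`; so `‖p_j(M)‖₂ ≤ ‖V‖₂ ‖V⁻¹‖₂ max_{σ(M)} |p_j| ≤ ‖V‖₂ ‖V⁻¹‖₂ c`. The error then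
splits into the perturbation `Σ_{j<k} (α_j - α̃_j) p_j(M)`, bounded term by term, and the tail
`Σ_{j≥k} α_j p_j(M)`, dominated by a geometric series. -/

open Polynomial

theorem Polynomial.aeval_units_conj {R A : Type*} [CommSemiring R] [Semiring A] [Algebra R A]
    (u : Aˣ) (a : A) (q : R[X]) : aeval (↑u * a * ↑u⁻¹) q = ↑u * aeval a q * ↑u⁻¹ := by
  simp only [aeval_eq_sum_range, Finset.mul_sum, Finset.sum_mul, Units.conj_pow,
    mul_smul_comm, smul_mul_assoc]

namespace Matrix

variable {n 𝕜 : Type*} [Fintype n] [DecidableEq n]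

theorem aeval_diagonal [Field 𝕜] (d : n → 𝕜) (q : 𝕜[X]) :
    aeval (diagonal d) q = diagonal fun i => q.eval (d i) := by
  change aeval (diagonalAlgHom 𝕜 d) q = _
  rw [aeval_algHom_apply, diagonalAlgHom_apply]
  congr with i
  simp [coe_aeval_eq_eval]

theorem IsDiag.spectrum_conj [Field 𝕜] {V Λ : Matrix n n 𝕜} (hV : IsUnit V.det)
    (hΛ : Λ.IsDiag) : spectrum 𝕜 (V * Λ * V⁻¹) = Set.range Λ.diag := by
  obtain ⟨u, rfl⟩ := (isUnit_iff_isUnit_det V).mpr hV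
  rw [← coe_units_inv, spectrum.units_conjugate]
  conv_lhs => rw [← hΛ.diagonal_diag]
  exact spectrum_diagonal _

open scoped Matrix.Norms.L2Operator

theorem IsDiag.l2_opNorm_aeval_conj_le [RCLike 𝕜] {V Λ : Matrix n n 𝕜} (hV : IsUnit V.det)
    (hΛ : Λ.IsDiag) (q : 𝕜[X]) {b : ℝ} (hb : 0 ≤ b) (hq : ∀ i, ‖q.eval (Λ i i)‖ ≤ b) :
    ‖aeval (V * Λ * V⁻¹) q‖ ≤ ‖V‖ * ‖V⁻¹‖ * b := by
  obtain ⟨u, rfl⟩ := (isUnit_iff_isUnit_det V).mpr hV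
  have hD : ‖aeval Λ q‖ ≤ b := by
    rw [← hΛ.diagonal_diag, aeval_diagonal, l2_opNorm_diagonal]
    exact (pi_norm_le_iff_of_nonneg hb).mpr hq
  rw [← coe_units_inv, aeval_units_conj, mul_right_comm]
  grw [norm_mul₃_le, hD]

theorem IsDiag.l2_opNorm_aeval_conj_le_sSup [RCLike 𝕜] {V Λ : Matrix n n 𝕜} (hV : IsUnit V.det)
    (hΛ : Λ.IsDiag) (q : 𝕜[X]) :
    ‖aeval (V * Λ * V⁻¹) q‖ ≤
      ‖V‖ * ‖V⁻¹‖ * sSup ((fun μ => ‖q.eval μ‖) '' spectrum 𝕜 (V * Λ * V⁻¹)) := by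
  rw [hΛ.spectrum_conj hV, ← Set.range_comp]
  exact hΛ.l2_opNorm_aeval_conj_le hV q (Real.iSup_nonneg fun _ => norm_nonneg _)
    fun i => le_csSup (Set.finite_range _).bddAbove ⟨i, rfl⟩

end Matrix

open scoped Matrix.Norms.L2Operator in
theorem specNorm_eq_l2_opNorm {m n : ℕ} (A : Matrix (Fin m) (Fin n) ℂ) : specNorm A = ‖A‖ := rfl

section GeometricSeries

variable {𝕜 E : Type*} [NormedField 𝕜] [NormedAddCommGroup E] [NormedSpace 𝕜 E]
  {α : ℕ → 𝕜} {P : ℕ → E} {A D r : ℝ}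

theorem norm_smul_le_geometric (hα : ∀ j, ‖α j‖ ≤ A * r ^ j) (hP : ∀ j, ‖P j‖ ≤ D) (j : ℕ) :
    ‖α j • P j‖ ≤ D * A * r ^ j := by
  rw [norm_smul, mul_assoc, mul_comm D]
  exact mul_le_mul (hα j) (hP j) (norm_nonneg _) ((norm_nonneg _).trans (hα j))

theorem summable_smul_of_geometric [CompleteSpace E] (hr₀ : 0 ≤ r) (hr₁ : r < 1)
    (hα : ∀ j, ‖α j‖ ≤ A * r ^ j) (hP : ∀ j, ‖P j‖ ≤ D) : Summable fun j => α j • P j :=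
  .of_norm_bounded ((summable_geometric_of_lt_one hr₀ hr₁).mul_left (D * A))
    (norm_smul_le_geometric hα hP)

theorem norm_tsum_smul_le_geometric (hr₀ : 0 ≤ r) (hr₁ : r < 1)
    (hα : ∀ j, ‖α j‖ ≤ A * r ^ j) (hP : ∀ j, ‖P j‖ ≤ D) :
    ‖∑' j, α j • P j‖ ≤ D * A / (1 - r) :=
  tsum_of_norm_bounded ((hasSum_geometric_of_lt_one hr₀ hr₁).mul_left (D * A))
    (norm_smul_le_geometric hα hP)

theorem norm_tsum_smul_nat_add_le_geometric (hr₀ : 0 ≤ r) (hr₁ : r < 1)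
    (hα : ∀ j, ‖α j‖ ≤ A * r ^ j) (hP : ∀ j, ‖P j‖ ≤ D) (k : ℕ) :
    ‖∑' i, α (i + k) • P (i + k)‖ ≤ D * A * r ^ k / (1 - r) := by
  have hα' : ∀ i, ‖α (i + k)‖ ≤ A * r ^ k * r ^ i := fun i => by
    simpa [pow_add, mul_assoc, mul_comm (r ^ i)] using hα (i + k)
  simpa [mul_assoc] using norm_tsum_smul_le_geometric hr₀ hr₁ hα' fun i => hP (i + k)

theorem norm_sum_smul_le {ι : Type*} (s : Finset ι) {a : ι → 𝕜} {x : ι → E} {ε : ℝ}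
    {B : ι → ℝ} (ha : ∀ i, ‖a i‖ ≤ ε) (hx : ∀ i, ‖x i‖ ≤ B i) :
    ‖∑ i ∈ s, a i • x i‖ ≤ ε * ∑ i ∈ s, B i := by
  rw [Finset.mul_sum]
  refine (norm_sum_le _ _).trans (Finset.sum_le_sum fun i _ => ?_)
  rw [norm_smul]
  exact mul_le_mul (ha i) (hx i) (norm_nonneg _) ((norm_nonneg _).trans (ha i))

theorem norm_tsum_sub_sum_smul_le [CompleteSpace E] {αt : ℕ → 𝕜} {B : ℕ → ℝ} {ε : ℝ}
    (hr₀ : 0 ≤ r) (hr₁ : r < 1) (hα : ∀ j, ‖α j‖ ≤ A * r ^ j) (hαt : ∀ j, ‖αt j - α j‖ ≤ ε)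
    (hPB : ∀ j, ‖P j‖ ≤ B j) (hBD : ∀ j, B j ≤ D) (k : ℕ) :
    ‖∑' j, α j • P j - ∑ j ∈ Finset.range k, αt j • P j‖ ≤
      ε * ∑ j ∈ Finset.range k, B j + D * A * r ^ k / (1 - r) := by
  have hP : ∀ j, ‖P j‖ ≤ D := fun j => (hPB j).trans (hBD j)
  have hsplit : ∑' j, α j • P j - ∑ j ∈ Finset.range k, αt j • P j =
      ∑ j ∈ Finset.range k, (α j - αt j) • P j + ∑' i, α (i + k) • P (i + k) := by
    rw [← (summable_smul_of_geometric hr₀ hr₁ hα hP).sum_add_tsum_nat_add k]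
    simp only [sub_smul, Finset.sum_sub_distrib]
    abel
  have hhead := norm_sum_smul_le (Finset.range k) (fun j => (norm_sub_rev _ _).trans_le (hαt j)) hPB
  rw [hsplit]
  exact (norm_add_le _ _).trans
    (add_le_add hhead (norm_tsum_smul_nat_add_le_geometric hr₀ hr₁ hα hP k))

end GeometricSeries

theorem akhiezer_iteration_inexact_coeffs_general {ℓ : ℕ}
    (M V Λ : Matrix (Fin ℓ) (Fin ℓ) ℂ)
    (hV : IsUnit V.det) (hΛ : Λ.IsDiag) (hM : M = V * Λ * V⁻¹)
    (p : ℕ → Polynomial ℂ) (α αt : ℕ → ℂ) (ε : ℝ)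
    (K M₀ c ρ : ℝ) (hc : 0 < c) (hρ : 1 < ρ)
    (hα : ∀ j, ‖α j‖ ≤ K * M₀ * ρ⁻¹ ^ j)
    (hp : ∀ j, ∀ μ ∈ spectrum ℂ M, ‖(p j).eval μ‖ ≤ c)
    (hαt : ∀ j, ‖αt j - α j‖ ≤ ε) :
    Summable (fun j => α j • Polynomial.aeval M (p j)) ∧
      ∀ k, specNorm ((∑' j, α j • Polynomial.aeval M (p j)) -
            ∑ j ∈ Finset.range k, αt j • Polynomial.aeval M (p j)) ≤
          specNorm V * specNorm V⁻¹ *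
            (ε * ∑ j ∈ Finset.range k,
                sSup ((fun μ => ‖(p j).eval μ‖) '' spectrum ℂ M) +
              c * K * M₀ * ρ⁻¹ ^ k / (1 - ρ⁻¹)) := by
  open scoped Matrix.Norms.L2Operator in
  subst hM
  have hρ₀ : 0 ≤ ρ⁻¹ := inv_nonneg.2 (by linarith)
  have hρ₁ : ρ⁻¹ < 1 := inv_lt_one_of_one_lt₀ hρ
  have hP := fun j => hΛ.l2_opNorm_aeval_conj_le_sSup hV (p j)
  have hPc : ∀ j, ‖V‖ * ‖V⁻¹‖ * sSup ((fun μ => ‖(p j).eval μ‖) '' spectrum ℂ (V * Λ * V⁻¹)) ≤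
      ‖V‖ * ‖V⁻¹‖ * c := fun j => by
    gcongr
    exact Real.sSup_le (by rintro _ ⟨μ, hμ, rfl⟩; exact hp j μ hμ) hc.le
  refine ⟨summable_smul_of_geometric hρ₀ hρ₁ hα fun j => (hP j).trans (hPc j), fun k => ?_⟩
  simp only [specNorm_eq_l2_opNorm]
  refine (norm_tsum_sub_sum_smul_le hρ₀ hρ₁ hα hαt hP hPc k).trans_eq ?_
  rw [← Finset.mul_sum]
  ring

/-- Let `M = V Λ V⁻¹` be diagonalizable, `|α_j| ≤ C·M₀·ρ^{-j}` with `ρ > 1`,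
`|p_j(λ)| ≤ c` on `σ(M)`, and `F = Σ_j α_j p_j(M)` (which converges).  If `|α̃_j - α_j| ≤ ε`
for all `j`, then for every `k`,
`‖F - Σ_{j<k} α̃_j p_j(M)‖₂ ≤
  ‖V‖₂·‖V⁻¹‖₂·(ε·Σ_{j<k} max_{λ∈σ(M)} |p_j(λ)| + c·C·M₀·ρ^{-k}/(1-ρ⁻¹))`. -/
theorem akhiezer_iteration_inexact_coeffs {ℓ : ℕ}
    (M V Λ : Matrix (Fin ℓ) (Fin ℓ) ℂ)
    (hV : IsUnit V.det) (hΛ : Λ.IsDiag) (hM : M = V * Λ * V⁻¹)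
    (p : ℕ → Polynomial ℂ) (α αt : ℕ → ℂ) (ε : ℝ)
    (K M₀ c ρ : ℝ) (hK : 0 < K) (hM₀ : 0 < M₀) (hc : 0 < c) (hρ : 1 < ρ)
    (hα : ∀ j, ‖α j‖ ≤ K * M₀ * ρ⁻¹ ^ j)
    (hp : ∀ j, ∀ μ ∈ spectrum ℂ M, ‖(p j).eval μ‖ ≤ c)
    (hαt : ∀ j, ‖αt j - α j‖ ≤ ε) :
    Summable (fun j => α j • Polynomial.aeval M (p j)) ∧
      ∀ k, specNorm ((∑' j, α j • Polynomial.aeval M (p j)) -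
            ∑ j ∈ Finset.range k, αt j • Polynomial.aeval M (p j)) ≤
          specNorm V * specNorm V⁻¹ *
            (ε * ∑ j ∈ Finset.range k,
                sSup ((fun μ => ‖(p j).eval μ‖) '' spectrum ℂ M) +
              c * K * M₀ * ρ⁻¹ ^ k / (1 - ρ⁻¹)) :=
  akhiezer_iteration_inexact_coeffs_general M V Λ hV hΛ hM p α αt ε K M₀ c ρ hc hρ hα hp hαt
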